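/- arXiv:1904.04090 — 4 statements merged into one kernel-verified Lean document; each statement's English description precedes it below -/
import Mathlib

section
/- Let R* = {(x, 2^k · x) | x, k ∈ ℕ} ⊆ ℕ². There do not exist b ∈ ℕ², a periodic set P ⊆ ℕ² (i.e., 0 ∈ P and P is closed under addition), and natural numbers k < ℓ with k ≥ 1, such that (1, 2^k) ∈ b + P, (1, 2^ℓ) ∈ b + P, and b + P ⊆ R*. -/
/-- `R* = {(x, 2^k · x) | x, k ∈ ℕ}`. -/
def Rstar : Set (ℕ × ℕ) := {p | ∃ x k : ℕ, p = (x, 2 ^ k * x)}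

/-- A subset of ℕ² is periodic if it contains 0 and is closed under addition. -/
def IsPeriodic2 (P : Set (ℕ × ℕ)) : Prop :=
  (0, 0) ∈ P ∧ ∀ x ∈ P, ∀ y ∈ P, x + y ∈ P

lemma two_pow_add_ne {a c m : ℕ} (h : a < c) : 2 ^ a + 2 ^ c ≠ 2 ^ m := by
  intro he
  have h1 : 2 ^ c < 2 ^ m := by
    have : 0 < 2 ^ a := Nat.pow_pos (show 0 < 2 by norm_num)
    omega
  have h2 : c < m := (Nat.pow_lt_pow_iff_right one_lt_two).mp h1
  have h3 : 2 ^ (c + 1) ≤ 2 ^ m := Nat.pow_le_pow_right (by norm_num) h2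
  have h4 : 2 ^ a < 2 ^ c := Nat.pow_lt_pow_right one_lt_two h
  have : (2:ℕ) ^ (c+1) = 2 ^ c + 2 ^ c := by ring
  omega

lemma two_pow_add_eq {a b c : ℕ} (h : 2 ^ a + 2 ^ b = 2 ^ c) : a = b := by
  rcases lt_trichotomy a b with h' | h' | h'
  · exact absurd h (two_pow_add_ne h')
  · exact h'
  · exact absurd (by omega : 2 ^ b + 2 ^ a = 2 ^ c) (two_pow_add_ne h')

theorem stmt_7 :
    ¬ ∃ (b : ℕ × ℕ) (P : Set (ℕ × ℕ)) (k ℓ : ℕ),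
      IsPeriodic2 P ∧ 1 ≤ k ∧ k < ℓ ∧
      (1, 2 ^ k) ∈ (fun p => b + p) '' P ∧
      (1, 2 ^ ℓ) ∈ (fun p => b + p) '' P ∧
      (fun p => b + p) '' P ⊆ Rstar := by
  rintro ⟨b, P, k, ℓ, ⟨hP0, hPadd⟩, hk, hkl, ⟨p, hp, hbp⟩, ⟨q, hq, hbq⟩, hsub⟩
  simp only at hbp hbq
  have hbp1 : b.1 + p.1 = 1 := congrArg Prod.fst hbp
  have hbp2 : b.2 + p.2 = 2 ^ k := congrArg Prod.snd hbp
  have hbq1 : b.1 + q.1 = 1 := congrArg Prod.fst hbq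
  have hbq2 : b.2 + q.2 = 2 ^ ℓ := congrArg Prod.snd hbq
  have hb : b ∈ Rstar := hsub ⟨(0, 0), hP0, by simp⟩
  obtain ⟨x, m, hxm⟩ := hb
  have hx1 : b.1 = x := congrArg Prod.fst hxm
  have hx2 : b.2 = 2 ^ m * x := congrArg Prod.snd hxm
  rcases (show b.1 = 0 ∨ b.1 = 1 by omega) with h1 | h1
  · -- b = (0,0)
    have hx0 : x = 0 := by omega
    rw [hx0, mul_zero] at hx2
    have hb2 : b.2 = 0 := hx2
    have hpq : b + (p + q) ∈ Rstar := hsub ⟨p + q, hPadd p hp q hq, rfl⟩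
    obtain ⟨y, n, hyn⟩ := hpq
    have hy1 : b.1 + (p.1 + q.1) = y := congrArg Prod.fst hyn
    have hy2 : b.2 + (p.2 + q.2) = 2 ^ n * y := congrArg Prod.snd hyn
    have hy : y = 2 := by omega
    rw [hy] at hy2
    have : 2 ^ k + 2 ^ ℓ = 2 ^ (n + 1) := by
      rw [pow_succ]; omega
    exact absurd (two_pow_add_eq this) (by omega)
  · -- b = (1, 2^m)
    have hx1' : x = 1 := by omega
    rw [hx1', mul_one] at hx2
    have hb2 : b.2 = 2 ^ m := hx2
    have hqq : b + (q + q) ∈ Rstar := hsub ⟨q + q, hPadd q hq q hq, rfl⟩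
    obtain ⟨y, n, hyn⟩ := hqq
    have hy1 : b.1 + (q.1 + q.1) = y := congrArg Prod.fst hyn
    have hy2 : b.2 + (q.2 + q.2) = 2 ^ n * y := congrArg Prod.snd hyn
    have hy : y = 1 := by omega
    rw [hy, mul_one] at hy2
    have hnm : 2 ^ n + 2 ^ m = 2 ^ (ℓ + 1) := by
      rw [pow_succ]; omega
    have hnm' : n = m := two_pow_add_eq hnm
    rw [hnm'] at hnm
    have hml : m = ℓ := by
      have : (2:ℕ) ^ (m + 1) = 2 ^ (ℓ + 1) := by rw [pow_succ, pow_succ]; omega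
      have := Nat.pow_right_injective (le_refl 2) this
      omega
    have hmk : m ≤ k := by
      have : 2 ^ m ≤ 2 ^ k := by omega
      exact (Nat.pow_le_pow_iff_right one_lt_two).mp this
    omega
end

section
/- The set R* = {(x, 2^k · x) | x, k ∈ ℕ} ⊆ ℕ² is not a finite union of sets of the form b + P with b ∈ ℕ² and P ⊆ ℕ² periodic. -/
/-! Infinitely many of the points `(1, 2^k)` of `R*` lie in one translate `b + P`. Adding the
periods `p, q` that reach `(1, 2^k)` and `(1, 2^m)`, with `k < m` and `b.2 < 2^k`, gives the point
`b + p + q = (1 + q.1, 2^k + 2^m - b.2)` of `b + P`: its first coordinate is `1` or `2`, so for it to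
lie in `R*` its second coordinate would have to be a power of two, yet it lies strictly between
`2^m` and `2^(m+1)`. -/

lemma Nat.ne_two_pow_of_lt_of_lt {m n : ℕ} (h₁ : 2 ^ m < n) (h₂ : n < 2 ^ (m + 1)) (t : ℕ) :
    n ≠ 2 ^ t := by
  rintro rfl
  rw [Nat.pow_lt_pow_iff_right one_lt_two] at h₁ h₂
  omega

lemma exists_eq_two_pow_of_mem_Rstar {a y : ℕ} (h : (2 ^ a, y) ∈ Rstar) : ∃ t, y = 2 ^ t := by
  obtain ⟨x, k, hxy⟩ := h
  simp only [Prod.mk.injEq] at hxy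
  obtain ⟨rfl, rfl⟩ := hxy
  exact ⟨k + a, (pow_add 2 k a).symm⟩

lemma add_add_notMem_Rstar {b p q : ℕ × ℕ} {k m : ℕ} (hp : b + p = (1, 2 ^ k))
    (hq : b + q = (1, 2 ^ m)) (hb : b.2 < 2 ^ k) (hkm : k < m) : b + (p + q) ∉ Rstar := by
  simp only [Prod.ext_iff, Prod.fst_add, Prod.snd_add] at hp hq
  have hpow : 2 ^ k < 2 ^ m := Nat.pow_lt_pow_right one_lt_two hkm
  intro hmem
  have hlo : 2 ^ m < (b + (p + q)).2 := by
    simp only [Prod.snd_add]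
    omega
  have hhi : (b + (p + q)).2 < 2 ^ (m + 1) := by
    simp only [Prod.snd_add, pow_succ]
    omega
  obtain ⟨a, ha⟩ : ∃ a, (b + (p + q)).1 = 2 ^ a := by
    simp only [Prod.fst_add]
    rcases (by omega : q.1 = 0 ∨ q.1 = 1) with h | h
    exacts [⟨0, by omega⟩, ⟨1, by omega⟩]
  rw [← Prod.mk.eta (p := b + (p + q)), ha] at hmem
  obtain ⟨t, ht⟩ := exists_eq_two_pow_of_mem_Rstar hmem
  exact Nat.ne_two_pow_of_lt_of_lt hlo hhi t ht

lemma not_image_add_subset_Rstar {b : ℕ × ℕ} {P : Set (ℕ × ℕ)}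
    (hP : ∀ x ∈ P, ∀ y ∈ P, x + y ∈ P)
    (hinf : {k : ℕ | (1, 2 ^ k) ∈ (fun p => b + p) '' P}.Infinite) :
    ¬ (fun p => b + p) '' P ⊆ Rstar := by
  obtain ⟨k₀, ⟨r, -, hr⟩, -⟩ := hinf.exists_gt 0
  obtain ⟨k, ⟨p, hpP, hp⟩, hk₀k⟩ := hinf.exists_gt k₀
  obtain ⟨m, ⟨q, hqP, hq⟩, hkm⟩ := hinf.exists_gt k
  have hb : b.2 < 2 ^ k :=
    calc b.2 ≤ (b + r).2 := Nat.le_add_right _ _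
      _ = 2 ^ k₀ := congrArg Prod.snd hr
      _ < 2 ^ k := Nat.pow_lt_pow_right one_lt_two hk₀k
  exact fun hsub => add_add_notMem_Rstar hp hq hb hkm (hsub ⟨p + q, hP p hpP q hqP, rfl⟩)

lemma exists_infinite_of_iUnion_eq_univ {ι α : Type*} [Finite ι] [Infinite α] {s : ι → Set α}
    (h : ⋃ i, s i = Set.univ) : ∃ i, (s i).Infinite := by
  by_contra! hfin
  exact Set.infinite_univ (h ▸ Set.finite_iUnion hfin)

theorem stmt_8 :
    ¬ ∃ (N : ℕ) (b : Fin N → ℕ × ℕ) (P : Fin N → Set (ℕ × ℕ)),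
      (∀ i, IsPeriodic2 (P i)) ∧
      Rstar = ⋃ i, (fun p => b i + p) '' P i := by
  rintro ⟨N, b, P, hP, hR⟩
  have hcover : ⋃ i, {k : ℕ | (1, 2 ^ k) ∈ (fun p => b i + p) '' P i} = Set.univ := by
    refine Set.eq_univ_of_forall fun k => ?_
    have hk : ((1 : ℕ), 2 ^ k) ∈ Rstar := ⟨1, k, by simp⟩
    rw [hR, Set.mem_iUnion] at hk
    exact Set.mem_iUnion.mpr hk
  obtain ⟨i, hinf⟩ := exists_infinite_of_iUnion_eq_univ hcover
  exact not_image_add_subset_Rstar (hP i).2 hinf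
    (hR ▸ Set.subset_iUnion (fun j => (fun p => b j + p) '' P j) i)
end

section
/- In the 1-dimensional VAS with actions {−1, 0, 2}, for all k, k', m ∈ ℕ: k →_w k' for the word w = (−1)^m · 0 · 2^m (m copies of −1, then 0, then m copies of 2, with all intermediate configurations in ℕ) if and only if m ≤ k and k' = k + m. Consequently, {k' | ∃ m, k →_{(−1)^m 0 2^m} k'} = {k' | k ≤ k' ≤ 2k}. -/
/-! The `m` decrements are enabled exactly when `m ≤ k` and lead to `k - m`; increments are always
enabled, so the run ends at `k - m + 2m = k + m`, and `m` ranges over `0, …, k`. -/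

/-- A run of a 1-dimensional VAS along a word of actions in ℤ:
all intermediate configurations must be natural numbers. -/
def Run1 : List ℤ → ℕ → ℕ → Prop
  | [], x, y => x = y
  | a :: w, x, y => ∃ z : ℕ, (z : ℤ) = (x : ℤ) + a ∧ Run1 w z y

theorem run1_append (w₁ w₂ : List ℤ) (x y : ℕ) :
    Run1 (w₁ ++ w₂) x y ↔ ∃ z, Run1 w₁ x z ∧ Run1 w₂ z y := by
  induction w₁ generalizing x with
  | nil => simp [Run1]
  | cons a w ih => simp only [List.cons_append, Run1, ih]; grind

theorem run1_cons_natCast (a : ℕ) (w : List ℤ) (x y : ℕ) :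
    Run1 ((a : ℤ) :: w) x y ↔ Run1 w (x + a) y := by
  simp only [Run1]
  exact ⟨fun ⟨z, hz, h⟩ => by rwa [show z = x + a by omega] at h, fun h => ⟨x + a, by simp, h⟩⟩

theorem run1_cons_neg_natCast (a : ℕ) (w : List ℤ) (x y : ℕ) :
    Run1 (-(a : ℤ) :: w) x y ↔ a ≤ x ∧ Run1 w (x - a) y := by
  simp only [Run1]
  constructor
  · rintro ⟨z, hz, h⟩
    exact ⟨by omega, by rwa [show z = x - a by omega] at h⟩
  · rintro ⟨hax, h⟩
    exact ⟨x - a, by omega, h⟩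

theorem run1_replicate_natCast (m a x y : ℕ) :
    Run1 (List.replicate m (a : ℤ)) x y ↔ y = x + m * a := by
  induction m generalizing x with
  | zero => simp [Run1, eq_comm]
  | succ m ih => rw [List.replicate_succ, run1_cons_natCast, ih]; grind

theorem run1_replicate_neg_natCast (m a x y : ℕ) :
    Run1 (List.replicate m (-(a : ℤ))) x y ↔ m * a ≤ x ∧ y = x - m * a := by
  induction m generalizing x with
  | zero => simp [Run1, eq_comm]
  | succ m ih =>
    rw [List.replicate_succ, run1_cons_neg_natCast, ih, Nat.succ_mul]
    omega

theorem run1_replicate_neg_one_zero_replicate_two_iff (m k k' : ℕ) :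
    Run1 (List.replicate m (-1) ++ [0] ++ List.replicate m 2) k k' ↔ m ≤ k ∧ k' = k + m := by
  have h₀ : ∀ x y, Run1 [0] x y ↔ x = y := by simp [Run1]
  rw [show (-1 : ℤ) = -((1 : ℕ) : ℤ) by simp, show (2 : ℤ) = ((2 : ℕ) : ℤ) by simp]
  simp only [run1_append, run1_replicate_neg_natCast, run1_replicate_natCast, h₀]
  constructor
  · rintro ⟨_, ⟨_, ⟨hm, rfl⟩, rfl⟩, rfl⟩
    omega
  · rintro ⟨hm, rfl⟩
    exact ⟨k - m, ⟨k - m, by omega, rfl⟩, by omega⟩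

theorem stmt_13 :
    (∀ k k' m : ℕ,
      Run1 (List.replicate m (-1) ++ [0] ++ List.replicate m 2) k k' ↔
        m ≤ k ∧ k' = k + m) ∧
    (∀ k : ℕ,
      {k' : ℕ | ∃ m : ℕ,
        Run1 (List.replicate m (-1) ++ [0] ++ List.replicate m 2) k k'} =
      {k' : ℕ | k ≤ k' ∧ k' ≤ 2 * k}) := by
  refine ⟨fun k k' m => run1_replicate_neg_one_zero_replicate_two_iff m k k', fun k => ?_⟩
  ext k'
  simp only [Set.mem_ofPred_eq, run1_replicate_neg_one_zero_replicate_two_iff]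
  constructor
  · rintro ⟨m, hm, rfl⟩
    omega
  · rintro ⟨hk, hk'⟩
    exact ⟨k' - k, by omega, by omega⟩
end

section
/- Let f : ℕ → ℕ and suppose there is a monotone relation R ⊆ ℕ^d × ℕ^d (meaning (x, y) ∈ R implies (x + v, y + v) ∈ R for all v ∈ ℕ^d, with d = 2 + ℓ) satisfying completeness: for every n there exist n' and e ∈ ℕ^ℓ with ((n, 0, 0ℓ), (n', f(n), e)) ∈ R; and safety: for all n, n', r, e, ((n, 0, 0ℓ), (n', r, e)) ∈ R implies r ≤ f(n). Then f is non-decreasing. -/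
theorem stmt_18 (ℓ : ℕ) (f : ℕ → ℕ)
    (R : (ℕ × ℕ × (Fin ℓ → ℕ)) → (ℕ × ℕ × (Fin ℓ → ℕ)) → Prop)
    (hmono : ∀ x y v, R x y → R (x + v) (y + v))
    (hcomp : ∀ n : ℕ, ∃ (n' : ℕ) (e : Fin ℓ → ℕ), R (n, 0, 0) (n', f n, e))
    (hsafe : ∀ (n n' r : ℕ) (e : Fin ℓ → ℕ), R (n, 0, 0) (n', r, e) → r ≤ f n) :
    ∀ m n : ℕ, m ≤ n → f m ≤ f n := by
  intro m n hmn
  obtain ⟨k, rfl⟩ := Nat.exists_eq_add_of_le hmn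
  obtain ⟨n', e, hrun⟩ := hcomp m
  -- Shifting the input counter of a run that outputs `f m` gives a run from input `m + k`, which safety bounds.
  have hshift := hmono _ _ (k, 0, 0) hrun
  simp only [Prod.mk_add_mk, add_zero] at hshift
  exact hsafe _ _ _ _ hshift
end
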